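/- Let U ⊆ ℝⁿ be open, let Ǧ : U × ℝⁿ → ℝ be a smooth family of asymmetric norms, and let F : U × ℝⁿ → ℝ be a horizontally C¹ family of asymmetric norms which is strongly convex with respect to Ǧ; suppose that for each x ∈ U the function α ↦ F_*(x, α)² is differentiable with gradient d_vF_*²(x, α). Then the map (x, α) ↦ d_vF_*²(x, α) is continuous on U × ℝⁿ. -/

import Mathlib

open scoped RealInnerProductSpace

/-- `ℝⁿ` with the Euclidean inner product. -/
abbrev En (n : ℕ) := EuclideanSpace ℝ (Fin n)

/-- An asymmetric norm on `ℝⁿ`. -/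
def IsAsymNorm {n : ℕ} (F : En n → ℝ) : Prop :=
  (∀ y, 0 ≤ F y) ∧ (∀ y, F y = 0 ↔ y = 0) ∧
  (∀ l : ℝ, 0 < l → ∀ y, F (l • y) = l * F y) ∧
  (∀ y₁ y₂, F (y₁ + y₂) ≤ F y₁ + F y₂)

/-- A horizontally `C¹` family of asymmetric norms on `Ut × ℝⁿ`: `F` is continuous,
each `F x` is an asymmetric norm, and the partial derivative of `F` with respect to
the (horizontal) variable `x` exists everywhere and is continuous. -/
def HorizC1Family {n : ℕ} (Ut : Set (En n)) (F : En n → En n → ℝ) : Prop :=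
  ContinuousOn (fun p : En n × En n => F p.1 p.2) (Ut ×ˢ Set.univ) ∧
  (∀ x ∈ Ut, IsAsymNorm (F x)) ∧
  ∃ DF : En n × En n → (En n →L[ℝ] ℝ),
    (∀ x ∈ Ut, ∀ y, HasFDerivAt (fun x' => F x' y) (DF (x, y)) x) ∧
    ContinuousOn DF (Ut ×ˢ Set.univ)

/-- The family of dual asymmetric norms `F_*(x, α) = sup {⟨α, y⟩ : F x y ≤ 1}`. -/
noncomputable def dualNormF {n : ℕ} (F : En n → En n → ℝ) (x α : En n) : ℝ :=
  sSup ((fun y => ⟪α, y⟫) '' {y | F x y ≤ 1})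

/-- A smooth family of asymmetric norms: each `G x` is an asymmetric norm and
`G` is `C^∞` on `Ut × (ℝⁿ \ {0})`. -/
def SmoothFamily {n : ℕ} (Ut : Set (En n)) (G : En n → En n → ℝ) : Prop :=
  (∀ x ∈ Ut, IsAsymNorm (G x)) ∧
  ContDiffOn ℝ (⊤ : ℕ∞) (fun p : En n × En n => G p.1 p.2) (Ut ×ˢ {y : En n | y ≠ 0})

/-- The subdifferential of `F(x,·)²` at `y`. -/
def subdiffSqF {n : ℕ} (F : En n → En n → ℝ) (x y : En n) : Set (En n) :=
  {α | ∀ z, (F x y) ^ 2 + ⟪α, z - y⟫ ≤ (F x z) ^ 2}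

/-- The family `F` is strongly convex with respect to the family `G` on `Ut`. -/
def StronglyConvexFamilyWrt {n : ℕ} (Ut : Set (En n)) (F G : En n → En n → ℝ) : Prop :=
  ∀ x ∈ Ut, ∀ y z α, α ∈ subdiffSqF F x y →
    (F x y) ^ 2 + ⟪α, z - y⟫ + (G x (z - y)) ^ 2 ≤ (F x z) ^ 2

section AuxLemmas

variable {n : ℕ}

lemma asym_zero {Fx : En n → ℝ} (h : IsAsymNorm Fx) : Fx 0 = 0 := (h.2.1 0).2 rfl

lemma exists_lower_bound [Nontrivial (En n)] {Fx : En n → ℝ} (h : IsAsymNorm Fx)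
    (hc : Continuous Fx) : ∃ c > 0, ∀ y, c * ‖y‖ ≤ Fx y := by
  obtain ⟨u₀, hu₀, hmin⟩ := (isCompact_sphere (0:En n) 1).exists_isMinOn
    (NormedSpace.sphere_nonempty.2 zero_le_one) hc.continuousOn
  have hu₀n : ‖u₀‖ = 1 := mem_sphere_zero_iff_norm.mp hu₀
  have hpos : 0 < Fx u₀ := by
    rcases (h.1 u₀).lt_or_eq with h1 | h1
    · exact h1
    · exfalso
      have : u₀ = 0 := (h.2.1 u₀).1 h1.symm
      rw [this] at hu₀n; simp at hu₀n
  refine ⟨Fx u₀, hpos, fun y => ?_⟩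
  rcases eq_or_ne y 0 with rfl | hy
  · simp [asym_zero h]
  · have hyn : (0:ℝ) < ‖y‖ := norm_pos_iff.mpr hy
    set u : En n := ‖y‖⁻¹ • y with hu
    have hun : u ∈ Metric.sphere (0:En n) 1 := by
      rw [mem_sphere_zero_iff_norm, hu, norm_smul]
      simp [abs_of_pos (inv_pos.2 hyn), inv_mul_cancel₀ hyn.ne']
    have hyu : y = ‖y‖ • u := by rw [hu, smul_inv_smul₀ hyn.ne']
    have hFy : Fx y = ‖y‖ * Fx u := by
      conv_lhs => rw [hyu]
      rw [h.2.2.1 _ hyn u]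
    calc Fx u₀ * ‖y‖ ≤ Fx u * ‖y‖ := by
          have := hmin hun; exact mul_le_mul_of_nonneg_right this (norm_nonneg _)
      _ = Fx y := by rw [hFy]; ring

variable {F : En n → En n → ℝ}

lemma dnf_bddAbove {x : En n} {c : ℝ} (hc : 0 < c) (hlb : ∀ y, c * ‖y‖ ≤ F x y) (α : En n) :
    BddAbove ((fun y => ⟪α, y⟫) '' {y | F x y ≤ 1}) := by
  refine ⟨‖α‖ / c, ?_⟩
  rintro _ ⟨y, hy, rfl⟩
  have h1 : ‖y‖ ≤ 1 / c := by
    rw [le_div_iff₀ hc]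
    have := hlb y; have hy' : F x y ≤ 1 := hy
    nlinarith
  calc ⟪α, y⟫ ≤ ‖α‖ * ‖y‖ := real_inner_le_norm α y
    _ ≤ ‖α‖ * (1/c) := by
        exact mul_le_mul_of_nonneg_left h1 (norm_nonneg _)
    _ = ‖α‖ / c := by ring

lemma dnf_set_nonempty {x : En n} (h0 : F x 0 = 0) (α : En n) :
    ((fun y => ⟪α, y⟫) '' {y | F x y ≤ 1}).Nonempty :=
  ⟨0, ⟨0, by simp [Set.mem_setOf_eq, h0], by simp⟩⟩

lemma dnf_nonneg {x : En n} {c : ℝ} (hc : 0 < c) (hlb : ∀ y, c * ‖y‖ ≤ F x y)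
    (h0 : F x 0 = 0) (α : En n) : 0 ≤ dualNormF F x α := by
  have := le_csSup (dnf_bddAbove hc hlb α)
    (show (0:ℝ) ∈ _ from ⟨0, by simp [Set.mem_setOf_eq, h0], by simp⟩)
  simpa [dualNormF] using this

lemma dnf_le {x : En n} {c : ℝ} (hc : 0 < c) (hlb : ∀ y, c * ‖y‖ ≤ F x y)
    (h0 : F x 0 = 0) (α : En n) : dualNormF F x α ≤ ‖α‖ / c := by
  apply csSup_le (dnf_set_nonempty h0 α)
  rintro _ ⟨y, hy, rfl⟩
  have h1 : ‖y‖ ≤ 1 / c := by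
    rw [le_div_iff₀ hc]
    have := hlb y; have hy' : F x y ≤ 1 := hy
    nlinarith
  calc ⟪α, y⟫ ≤ ‖α‖ * ‖y‖ := real_inner_le_norm α y
    _ ≤ ‖α‖ * (1/c) := mul_le_mul_of_nonneg_left h1 (norm_nonneg _)
    _ = ‖α‖ / c := by ring

lemma dnf_add {x : En n} {c : ℝ} (hc : 0 < c) (hlb : ∀ y, c * ‖y‖ ≤ F x y)
    (h0 : F x 0 = 0) (α β : En n) :
    dualNormF F x (α + β) ≤ dualNormF F x α + dualNormF F x β := by
  apply csSup_le (dnf_set_nonempty h0 _)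
  rintro _ ⟨y, hy, rfl⟩
  have h1 : ⟪α, y⟫ ≤ dualNormF F x α := le_csSup (dnf_bddAbove hc hlb α) ⟨y, hy, rfl⟩
  have h2 : ⟪β, y⟫ ≤ dualNormF F x β := le_csSup (dnf_bddAbove hc hlb β) ⟨y, hy, rfl⟩
  show ⟪α + β, y⟫ ≤ _
  rw [inner_add_left]
  exact add_le_add h1 h2

lemma dnf_convexOn_sq {x : En n} {c : ℝ} (hc : 0 < c) (hlb : ∀ y, c * ‖y‖ ≤ F x y)
    (h0 : F x 0 = 0) : ConvexOn ℝ Set.univ (fun α => (dualNormF F x α) ^ 2) := by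
  refine ⟨convex_univ, fun α _ β _ a b ha hb hab => ?_⟩
  set A := dualNormF F x α with hA
  set B := dualNormF F x β with hB
  have hA0 : 0 ≤ A := dnf_nonneg hc hlb h0 α
  have hB0 : 0 ≤ B := dnf_nonneg hc hlb h0 β
  have hcombo : dualNormF F x (a • α + b • β) ≤ a * A + b * B := by
    apply csSup_le (dnf_set_nonempty h0 _)
    rintro _ ⟨y, hy, rfl⟩
    have h1 : ⟪α, y⟫ ≤ A := le_csSup (dnf_bddAbove hc hlb α) ⟨y, hy, rfl⟩
    have h2 : ⟪β, y⟫ ≤ B := le_csSup (dnf_bddAbove hc hlb β) ⟨y, hy, rfl⟩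
    show ⟪a • α + b • β, y⟫ ≤ _
    rw [inner_add_left, real_inner_smul_left, real_inner_smul_left]
    exact add_le_add (mul_le_mul_of_nonneg_left h1 ha) (mul_le_mul_of_nonneg_left h2 hb)
  have hcnn : 0 ≤ a * A + b * B := by positivity
  have hsq : (dualNormF F x (a • α + b • β)) ^ 2 ≤ (a * A + b * B) ^ 2 := by
    have hd0 : 0 ≤ dualNormF F x (a • α + b • β) := dnf_nonneg hc hlb h0 _
    nlinarith
  calc (dualNormF F x (a • α + b • β)) ^ 2 ≤ (a * A + b * B) ^ 2 := hsq
    _ ≤ a * A ^ 2 + b * B ^ 2 := by nlinarith [sq_nonneg (A - B), mul_nonneg ha hb]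

lemma dnf_le_scale {x x' : En n} {s c : ℝ} (hs : 0 < s) (hc : 0 < c)
    (hlb : ∀ y, c * ‖y‖ ≤ F x y)
    (hhom : ∀ l : ℝ, 0 < l → ∀ y, F x (l • y) = l * F x y)
    (h0' : F x' 0 = 0)
    (hle : ∀ y, F x y ≤ s * F x' y) (α : En n) :
    dualNormF F x' α ≤ s * dualNormF F x α := by
  apply csSup_le (dnf_set_nonempty h0' α)
  rintro _ ⟨y, hy, rfl⟩
  have hy' : F x' y ≤ 1 := hy
  have hmem : F x (s⁻¹ • y) ≤ 1 := by
    rw [hhom _ (inv_pos.2 hs)]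
    have := hle y
    calc s⁻¹ * F x y ≤ s⁻¹ * (s * F x' y) := by
          exact mul_le_mul_of_nonneg_left this (inv_pos.2 hs).le
      _ = F x' y := by field_simp
      _ ≤ 1 := hy'
  have h2 : ⟪α, y⟫ = s * ⟪α, s⁻¹ • y⟫ := by
    rw [real_inner_smul_right]; field_simp
  show ⟪α, y⟫ ≤ _
  rw [h2]
  exact mul_le_mul_of_nonneg_left (le_csSup (dnf_bddAbove hc hlb α) ⟨_, hmem, rfl⟩) hs.le

open Filter

lemma slope_tendsto_right {f : En n → ℝ} {G α : En n} (hG : HasGradientAt f G α) (v : En n) :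
    Tendsto (fun t : ℝ => (f (α + t • v) - f α) / t) (nhdsWithin 0 (Set.Ioi 0)) (nhds ⟪G, v⟫) := by
  have hcurve : HasDerivAt (fun t : ℝ => α + t • v) v 0 := by
    simpa using ((hasDerivAt_id (0:ℝ)).smul_const v).const_add α
  have hfd : HasFDerivAt f (InnerProductSpace.toDual ℝ (En n) G) α :=
    hasGradientAt_iff_hasFDerivAt.mp hG
  have hfd' : HasFDerivAt f (InnerProductSpace.toDual ℝ (En n) G) ((fun t : ℝ => α + t • v) 0) := by
    simpa using hfd
  have hcomp : HasDerivAt (fun t : ℝ => f (α + t • v)) ⟪G, v⟫ 0 := by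
    have := hfd'.comp_hasDerivAt 0 hcurve
    simpa [InnerProductSpace.toDual_apply_apply, Function.comp_def] using this
  have hT := hasDerivAt_iff_tendsto_slope.mp hcomp
  have hT' : Tendsto (slope (fun t : ℝ => f (α + t • v)) 0)
      (nhdsWithin 0 (Set.Ioi 0)) (nhds ⟪G, v⟫) :=
    hT.mono_left (nhdsWithin_mono _ (fun t ht => ne_of_gt ht))
  refine hT'.congr' ?_
  filter_upwards [self_mem_nhdsWithin] with t ht
  simp [slope_def_field]

lemma convex_gradient_ineq {f : En n → ℝ} (hf : ConvexOn ℝ Set.univ f) {G α : En n}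
    (hG : HasGradientAt f G α) (β : En n) : ⟪G, β - α⟫ ≤ f β - f α := by
  have hT := slope_tendsto_right hG (β - α)
  refine le_of_tendsto hT ?_
  filter_upwards [Ioc_mem_nhdsGT_of_mem (Set.mem_Ico.mpr ⟨le_refl (0:ℝ), zero_lt_one⟩)] with t ht
  have ht0 : 0 < t := ht.1
  have hconv := hf.2 (Set.mem_univ α) (Set.mem_univ β) (by linarith [ht.2] : (0:ℝ) ≤ 1 - t)
    ht0.le (by ring)
  have heq : α + t • (β - α) = (1 - t) • α + t • β := by module
  simp only [smul_eq_mul] at hconv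
  rw [div_le_iff₀ ht0, heq]
  nlinarith [hconv]

variable {U : Set (En n)}

lemma cont_fiber (hFc : ContinuousOn (fun p : En n × En n => F p.1 p.2) (U ×ˢ Set.univ))
    {x : En n} (hx : x ∈ U) : Continuous (F x) := by
  rw [← continuousOn_univ]
  have : ContinuousOn ((fun p : En n × En n => F p.1 p.2) ∘ (fun y : En n => (x, y))) Set.univ :=
    hFc.comp (Continuous.continuousOn (continuous_const.prodMk continuous_id))
      (fun y _ => ⟨hx, trivial⟩)
  exact this

lemma tube_bound (hU : IsOpen U)
    (hFc : ContinuousOn (fun p : En n × En n => F p.1 p.2) (U ×ˢ Set.univ))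
    {x₀ : En n} (hx₀ : x₀ ∈ U) {ε : ℝ} (hε : 0 < ε) [Nontrivial (En n)] :
    ∃ V, IsOpen V ∧ x₀ ∈ V ∧ V ⊆ U ∧
      ∀ x ∈ V, ∀ u ∈ Metric.sphere (0:En n) 1, |F x u - F x₀ u| < ε := by
  have hcont2 : ContinuousOn (fun p : En n × En n => F x₀ p.2) (U ×ˢ Set.univ) := by
    have : ContinuousOn ((fun p : En n × En n => F p.1 p.2) ∘
        (fun p : En n × En n => (x₀, p.2))) (U ×ˢ Set.univ) :=
      hFc.comp (Continuous.continuousOn (continuous_const.prodMk continuous_snd))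
        (fun p _ => ⟨hx₀, trivial⟩)
    exact this
  have hcontf : ContinuousOn (fun p : En n × En n => |F p.1 p.2 - F x₀ p.2|) (U ×ˢ Set.univ) :=
    (hFc.sub hcont2).abs
  have hWopen : IsOpen ((U ×ˢ Set.univ) ∩
      (fun p : En n × En n => |F p.1 p.2 - F x₀ p.2|) ⁻¹' Set.Iio ε) :=
    hcontf.isOpen_inter_preimage (hU.prod isOpen_univ) isOpen_Iio
  have hsub : ({x₀} : Set (En n)) ×ˢ Metric.sphere (0:En n) 1 ⊆
      (U ×ˢ Set.univ) ∩ (fun p : En n × En n => |F p.1 p.2 - F x₀ p.2|) ⁻¹' Set.Iio ε := by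
    rintro ⟨a, u⟩ ⟨ha, hu⟩
    rcases ha with rfl
    exact ⟨⟨hx₀, trivial⟩, by simpa using hε⟩
  obtain ⟨V₁, W₁, hV₁o, hW₁o, hxV₁, hSW₁, hVW⟩ :=
    generalized_tube_lemma isCompact_singleton (isCompact_sphere (0:En n) 1) hWopen hsub
  refine ⟨V₁ ∩ U, hV₁o.inter hU, ⟨hxV₁ rfl, hx₀⟩, Set.inter_subset_right, ?_⟩
  intro x hx u hu
  have := hVW (Set.mk_mem_prod hx.1 (hSW₁ hu))
  exact this.2

lemma global_bound {x x₀ : En n} (hx : IsAsymNorm (F x)) (hx₀ : IsAsymNorm (F x₀)) {ε : ℝ}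
    (hb : ∀ u ∈ Metric.sphere (0:En n) 1, |F x u - F x₀ u| ≤ ε) :
    ∀ y, |F x y - F x₀ y| ≤ ε * ‖y‖ := by
  intro y
  rcases eq_or_ne y 0 with rfl | hy
  · simp [(hx.2.1 0).2 rfl, (hx₀.2.1 0).2 rfl]
  · have hyn : (0:ℝ) < ‖y‖ := norm_pos_iff.mpr hy
    set u : En n := ‖y‖⁻¹ • y with hu
    have hun : u ∈ Metric.sphere (0:En n) 1 := by
      rw [mem_sphere_zero_iff_norm, hu, norm_smul]
      simp [abs_of_pos (inv_pos.2 hyn), inv_mul_cancel₀ hyn.ne']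
    have hyu : y = ‖y‖ • u := by rw [hu, smul_inv_smul₀ hyn.ne']
    have h1 : F x y = ‖y‖ * F x u := by
      conv_lhs => rw [hyu]
      rw [hx.2.2.1 _ hyn u]
    have h2 : F x₀ y = ‖y‖ * F x₀ u := by
      conv_lhs => rw [hyu]
      rw [hx₀.2.2.1 _ hyn u]
    rw [h1, h2, ← mul_sub, abs_mul, abs_of_pos hyn]
    calc ‖y‖ * |F x u - F x₀ u| ≤ ‖y‖ * ε :=
          mul_le_mul_of_nonneg_left (hb u hun) hyn.le
      _ = ε * ‖y‖ := by ring

lemma dnf_continuousOn [Nontrivial (En n)] (hU : IsOpen U)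
    (hFc : ContinuousOn (fun p : En n × En n => F p.1 p.2) (U ×ˢ Set.univ))
    (hFn : ∀ x ∈ U, IsAsymNorm (F x)) :
    ContinuousOn (fun p : En n × En n => dualNormF F p.1 p.2) (U ×ˢ Set.univ) := by
  rintro ⟨x₀, α₀⟩ ⟨hx₀, -⟩
  obtain ⟨c, hc, hlb⟩ := exists_lower_bound (hFn x₀ hx₀) (cont_fiber hFc hx₀)
  rw [Metric.continuousWithinAt_iff]
  intro ε hε
  set ε₁ : ℝ := min (c/2) (ε * c^2 / (8 * (‖α₀‖ + 1))) with hε₁def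
  have hε₁pos : 0 < ε₁ := lt_min (by positivity) (by positivity)
  obtain ⟨V, hVo, hxV, hVU, hVb⟩ := tube_bound hU hFc hx₀ hε₁pos
  obtain ⟨δV, hδV, hball⟩ := Metric.isOpen_iff.mp hVo x₀ hxV
  set δ : ℝ := min δV (min 1 (c * ε / 4)) with hδdef
  have hδpos : 0 < δ := lt_min hδV (lt_min one_pos (by positivity))
  refine ⟨δ, hδpos, ?_⟩
  rintro ⟨x, α⟩ ⟨hxU, -⟩ hdist
  rw [Prod.dist_eq, max_lt_iff] at hdist
  obtain ⟨hdx, hdα⟩ := hdist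
  have hxV' : x ∈ V := hball (Metric.mem_ball.mpr (hdx.trans_le (min_le_left _ _)))
  have hsb : ∀ u ∈ Metric.sphere (0:En n) 1, |F x u - F x₀ u| ≤ ε₁ :=
    fun u hu => (hVb x hxV' u hu).le
  have hgb := global_bound (hFn x hxU) (hFn x₀ hx₀) hsb
  have hε₁c : ε₁ ≤ c / 2 := min_le_left _ _
  have h0x : F x 0 = 0 := asym_zero (hFn x hxU)
  have h0x₀ : F x₀ 0 = 0 := asym_zero (hFn x₀ hx₀)
  have hlbx : ∀ y, (c/2) * ‖y‖ ≤ F x y := by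
    intro y
    have h1 := (abs_le.mp (hgb y)).1
    have h2 := hlb y
    have h3 : ε₁ * ‖y‖ ≤ (c/2) * ‖y‖ := mul_le_mul_of_nonneg_right hε₁c (norm_nonneg y)
    linarith
  have hle1 : ∀ y, F x y ≤ (1 + ε₁/c) * F x₀ y := by
    intro y
    have h1 := (abs_le.mp (hgb y)).2
    have h2 := hlb y
    have hkey : ε₁ * ‖y‖ ≤ (ε₁/c) * F x₀ y := by
      rw [div_mul_eq_mul_div, le_div_iff₀ hc]
      have := mul_le_mul_of_nonneg_left h2 hε₁pos.le
      linarith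
    have hexp : (1 + ε₁/c) * F x₀ y = F x₀ y + (ε₁/c) * F x₀ y := by ring
    linarith
  have hle2 : ∀ y, F x₀ y ≤ (1 + 2*(ε₁/c)) * F x y := by
    intro y
    have h1 := (abs_le.mp (hgb y)).1
    have h2 := hlbx y
    have hkey : ε₁ * ‖y‖ ≤ (2*(ε₁/c)) * F x y := by
      rw [show (2*(ε₁/c)) * F x y = 2*ε₁* F x y / c from by ring, le_div_iff₀ hc]
      have := mul_le_mul_of_nonneg_left h2 (by positivity : (0:ℝ) ≤ 2*ε₁)
      linarith
    have hexp : (1 + 2*(ε₁/c)) * F x y = F x y + (2*(ε₁/c)) * F x y := by ring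
    linarith
  have hs₁ : (0:ℝ) < 1 + ε₁/c := by positivity
  have hs₂ : (0:ℝ) < 1 + 2*(ε₁/c) := by positivity
  set A₀ := dualNormF F x₀ α₀ with hA₀
  set A := dualNormF F x₀ α with hA
  set B := dualNormF F x α with hB
  have hd1 : A ≤ (1 + ε₁/c) * B :=
    dnf_le_scale hs₁ (by positivity) hlbx (hFn x hxU).2.2.1 h0x₀ hle1 α
  have hd2 : B ≤ (1 + 2*(ε₁/c)) * A :=
    dnf_le_scale hs₂ hc hlb (hFn x₀ hx₀).2.2.1 h0x hle2 α
  have hAnn : 0 ≤ A := dnf_nonneg hc hlb h0x₀ α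
  have hBnn : 0 ≤ B := dnf_nonneg (by positivity) hlbx h0x α
  have hA_le : A ≤ ‖α‖ / c := dnf_le hc hlb h0x₀ α
  -- Lipschitz in α at x₀
  have hnd : ‖α - α₀‖ < δ := by rwa [← dist_eq_norm]
  have hnd' : ‖α₀ - α‖ < δ := by rwa [← dist_eq_norm, dist_comm, dist_eq_norm]
  have hlip1 : A ≤ A₀ + δ / c := by
    have h3 : dualNormF F x₀ (α₀ + (α - α₀)) ≤ A₀ + dualNormF F x₀ (α - α₀) :=
      dnf_add hc hlb h0x₀ α₀ (α - α₀)
    have h4 : dualNormF F x₀ (α - α₀) ≤ ‖α - α₀‖ / c := dnf_le hc hlb h0x₀ _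
    have h5 : α₀ + (α - α₀) = α := by abel
    rw [h5] at h3
    have h6 : ‖α - α₀‖ / c ≤ δ / c := div_le_div_of_nonneg_right hnd.le hc.le
    linarith
  have hlip2 : A₀ ≤ A + δ / c := by
    have h3 : dualNormF F x₀ (α + (α₀ - α)) ≤ A + dualNormF F x₀ (α₀ - α) :=
      dnf_add hc hlb h0x₀ α (α₀ - α)
    have h4 : dualNormF F x₀ (α₀ - α) ≤ ‖α₀ - α‖ / c := dnf_le hc hlb h0x₀ _
    have h5 : α + (α₀ - α) = α₀ := by abel
    rw [h5] at h3
    have h6 : ‖α₀ - α‖ / c ≤ δ / c := div_le_div_of_nonneg_right hnd'.le hc.le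
    linarith
  -- size bounds
  have hαb : ‖α‖ ≤ ‖α₀‖ + 1 := by
    have := norm_sub_norm_le α α₀
    have hδ1 : δ ≤ 1 := (min_le_right _ _).trans (min_le_left _ _)
    linarith
  have hAb : A ≤ (‖α₀‖ + 1) / c :=
    hA_le.trans (div_le_div_of_nonneg_right hαb hc.le)
  have hu0 : (0:ℝ) ≤ ε₁/c := by positivity
  have hBA : |B - A| ≤ 4 * (ε₁/c) * A := by
    have huA : 0 ≤ (ε₁/c) * A := mul_nonneg hu0 hAnn
    have hu2 : ε₁/c ≤ 1/2 := by
      rw [div_le_iff₀ hc]; linarith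
    have hB2A : B ≤ 2 * A := by
      have h1 : (1 + 2*(ε₁/c)) * A ≤ 2 * A :=
        mul_le_mul_of_nonneg_right (by linarith) hAnn
      linarith
    have hABu : A - B ≤ (ε₁/c) * B := by
      have hexp : (1 + ε₁/c) * B = B + (ε₁/c) * B := by ring
      linarith
    have huB : (ε₁/c) * B ≤ (ε₁/c) * (2*A) := mul_le_mul_of_nonneg_left hB2A hu0
    have hBAu : B - A ≤ 2 * ((ε₁/c) * A) := by
      have hexp : (1 + 2*(ε₁/c)) * A = A + 2 * ((ε₁/c)*A) := by ring
      linarith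
    have hexp2 : (ε₁/c) * (2*A) = 2 * ((ε₁/c)*A) := by ring
    rw [abs_le]
    constructor
    · linarith
    · linarith
  have hBA' : |B - A| ≤ ε / 2 := by
    have hε₁b : ε₁ ≤ ε * c^2 / (8 * (‖α₀‖ + 1)) := by
      rw [hε₁def]; exact min_le_right _ _
    have hstep : 4 * (ε₁/c) * A ≤ 4 * (ε₁/c) * ((‖α₀‖ + 1)/c) :=
      mul_le_mul_of_nonneg_left hAb (by positivity)
    have hmono : 4 * (ε₁/c) * ((‖α₀‖ + 1)/c) ≤
        4 * ((ε * c^2 / (8 * (‖α₀‖ + 1)))/c) * ((‖α₀‖ + 1)/c) := by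
      gcongr
    have hc0 : c ≠ 0 := ne_of_gt hc
    have hα1 : ‖α₀‖ + 1 ≠ 0 := by positivity
    have heq2 : 4 * ((ε * c^2 / (8 * (‖α₀‖ + 1)))/c) * ((‖α₀‖ + 1)/c) = ε / 2 := by
      field_simp
      ring
    linarith
  have hδc : δ / c ≤ ε / 4 := by
    have hδ2 : δ ≤ c * ε / 4 := (min_le_right _ _).trans (min_le_right _ _)
    rw [div_le_iff₀ hc]
    nlinarith
  show |B - A₀| < ε
  have htri : |B - A₀| ≤ |B - A| + |A - A₀| := by
    calc |B - A₀| = |(B - A) + (A - A₀)| := by ring_nf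
      _ ≤ |B - A| + |A - A₀| := abs_add_le _ _
  have hAA₀ : |A - A₀| ≤ δ / c := abs_le.mpr ⟨by linarith, by linarith⟩
  calc |B - A₀| ≤ |B - A| + |A - A₀| := htri
    _ ≤ ε/2 + ε/4 := add_le_add hBA' (hAA₀.trans hδc)
    _ < ε := by linarith

end AuxLemmas

/-- Continuity of the fiberwise gradient of the squared dual norm of a strongly
convex horizontally `C¹` family of asymmetric norms. -/
theorem grad_dual_sq_continuous {n : ℕ} (U : Set (En n)) (hU : IsOpen U)
    (G : En n → En n → ℝ) (hG : SmoothFamily U G)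
    (F : En n → En n → ℝ) (hF : HorizC1Family U F)
    (hsc : StronglyConvexFamilyWrt U F G)
    (g : En n → En n → En n)
    (hg : ∀ x ∈ U, ∀ α, HasGradientAt (fun β => (dualNormF F x β) ^ 2) (g x α) α) :
    ContinuousOn (fun p : En n × En n => g p.1 p.2) (U ×ˢ Set.univ) := by
  rcases subsingleton_or_nontrivial (En n) with hsub | hnt
  · have : (fun p : En n × En n => g p.1 p.2) = fun _ => 0 :=
      funext fun p => Subsingleton.elim _ _
    rw [this]; exact continuousOn_const
  obtain ⟨hFcont, hFnorm, -⟩ := hF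
  have hh : ContinuousOn (fun p : En n × En n => (dualNormF F p.1 p.2) ^ 2) (U ×ˢ Set.univ) :=
    (dnf_continuousOn hU hFcont hFnorm).pow 2
  have hconv : ∀ x ∈ U, ConvexOn ℝ Set.univ (fun α => (dualNormF F x α) ^ 2) := by
    intro x hx
    obtain ⟨c, hc, hlb⟩ := exists_lower_bound (hFnorm x hx) (cont_fiber hFcont hx)
    exact dnf_convexOn_sq hc hlb (asym_zero (hFnorm x hx))
  have hineq : ∀ x ∈ U, ∀ α β : En n,
      ⟪g x α, β - α⟫ ≤ (dualNormF F x β) ^ 2 - (dualNormF F x α) ^ 2 :=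
    fun x hx α β => convex_gradient_ineq (hconv x hx) (hg x hx α) β
  have key : ∀ v : En n,
      ContinuousOn (fun p : En n × En n => ⟪g p.1 p.2, v⟫) (U ×ˢ Set.univ) := by
    intro v
    rintro ⟨x₀, α₀⟩ ⟨hx₀, -⟩
    apply tendsto_order.2
    constructor
    · intro a ha
      have hneg : Filter.Tendsto
          (fun t : ℝ => ((dualNormF F x₀ α₀) ^ 2 - (dualNormF F x₀ (α₀ - t • v)) ^ 2) / t)
          (nhdsWithin 0 (Set.Ioi 0)) (nhds ⟪g x₀ α₀, v⟫) := by
        have h1 := (slope_tendsto_right (hg x₀ hx₀ α₀) (-v)).neg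
        rw [inner_neg_right, neg_neg] at h1
        refine h1.congr (fun t => ?_)
        have h2 : α₀ + t • (-v) = α₀ - t • v := by module
        rw [h2]; ring
      have hev : ∀ᶠ t in nhdsWithin (0:ℝ) (Set.Ioi 0),
          a < ((dualNormF F x₀ α₀) ^ 2 - (dualNormF F x₀ (α₀ - t • v)) ^ 2) / t :=
        hneg.eventually (eventually_gt_nhds ha) |>.mono (fun _ h => h)
      obtain ⟨t, hta, ht⟩ := (hev.and self_mem_nhdsWithin).exists
      have ht0 : (0:ℝ) < t := ht
      have hσ : ContinuousOn
          (fun p : En n × En n => (dualNormF F p.1 (p.2 - t • v)) ^ 2) (U ×ˢ Set.univ) := by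
        have : ContinuousOn ((fun p : En n × En n => (dualNormF F p.1 p.2) ^ 2) ∘
            (fun p : En n × En n => (p.1, p.2 - t • v))) (U ×ˢ Set.univ) :=
          hh.comp (Continuous.continuousOn (by fun_prop)) (fun p hp => ⟨hp.1, trivial⟩)
        exact this
      have hLc : ContinuousWithinAt (fun p : En n × En n =>
          ((dualNormF F p.1 p.2) ^ 2 - (dualNormF F p.1 (p.2 - t • v)) ^ 2) / t)
          (U ×ˢ Set.univ) (x₀, α₀) :=
        ((hh.sub hσ).div_const t) _ ⟨hx₀, trivial⟩
      have hev2 := (tendsto_order.1 hLc).1 a hta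
      filter_upwards [hev2, self_mem_nhdsWithin] with p hpa hps
      have hpU : p.1 ∈ U := hps.1
      have hiq := hineq p.1 hpU p.2 (p.2 - t • v)
      have h2 : (p.2 - t • v) - p.2 = (-t) • v := by module
      rw [h2, real_inner_smul_right] at hiq
      have h3 : ((dualNormF F p.1 p.2) ^ 2 - (dualNormF F p.1 (p.2 - t • v)) ^ 2) / t
          ≤ ⟪g p.1 p.2, v⟫ := by
        rw [div_le_iff₀ ht0]; nlinarith
      linarith
    · intro b hb
      have hpos : Filter.Tendsto
          (fun t : ℝ => ((dualNormF F x₀ (α₀ + t • v)) ^ 2 - (dualNormF F x₀ α₀) ^ 2) / t)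
          (nhdsWithin 0 (Set.Ioi 0)) (nhds ⟪g x₀ α₀, v⟫) :=
        slope_tendsto_right (hg x₀ hx₀ α₀) v
      have hev : ∀ᶠ t in nhdsWithin (0:ℝ) (Set.Ioi 0),
          ((dualNormF F x₀ (α₀ + t • v)) ^ 2 - (dualNormF F x₀ α₀) ^ 2) / t < b :=
        hpos.eventually (eventually_lt_nhds hb) |>.mono (fun _ h => h)
      obtain ⟨t, htb, ht⟩ := (hev.and self_mem_nhdsWithin).exists
      have ht0 : (0:ℝ) < t := ht
      have hσ : ContinuousOn
          (fun p : En n × En n => (dualNormF F p.1 (p.2 + t • v)) ^ 2) (U ×ˢ Set.univ) := by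
        have : ContinuousOn ((fun p : En n × En n => (dualNormF F p.1 p.2) ^ 2) ∘
            (fun p : En n × En n => (p.1, p.2 + t • v))) (U ×ˢ Set.univ) :=
          hh.comp (Continuous.continuousOn (by fun_prop)) (fun p hp => ⟨hp.1, trivial⟩)
        exact this
      have hUc : ContinuousWithinAt (fun p : En n × En n =>
          ((dualNormF F p.1 (p.2 + t • v)) ^ 2 - (dualNormF F p.1 p.2) ^ 2) / t)
          (U ×ˢ Set.univ) (x₀, α₀) :=
        ((hσ.sub hh).div_const t) _ ⟨hx₀, trivial⟩
      have hev2 := (tendsto_order.1 hUc).2 b htb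
      filter_upwards [hev2, self_mem_nhdsWithin] with p hpb hps
      have hpU : p.1 ∈ U := hps.1
      have hiq := hineq p.1 hpU p.2 (p.2 + t • v)
      have h2 : (p.2 + t • v) - p.2 = t • v := by module
      rw [h2, real_inner_smul_right] at hiq
      have h3 : ⟪g p.1 p.2, v⟫
          ≤ ((dualNormF F p.1 (p.2 + t • v)) ^ 2 - (dualNormF F p.1 p.2) ^ 2) / t := by
        rw [le_div_iff₀ ht0]; nlinarith
      linarith
  set b := EuclideanSpace.basisFun (Fin n) ℝ with hbdef
  have hrepr : (fun p : En n × En n => g p.1 p.2)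
      = fun p : En n × En n => ∑ i, ⟪g p.1 p.2, b i⟫ • b i := by
    funext p
    conv_lhs => rw [← b.sum_repr' (g p.1 p.2)]
    exact Finset.sum_congr rfl fun i _ => by rw [real_inner_comm]
  rw [hrepr]
  apply continuousOn_finset_sum
  intro i _
  exact (key (b i)).smul continuousOn_const
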